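/- arXiv:1201.0559 — 3 statements merged into one kernel-verified Lean document; each statement's English description precedes it below -/
import Mathlib

section
/- Let M be an ergodic reversible finite Markov chain with stationary distribution π, ε-mixing time T(ε) for some 0 < ε ≤ 1/2, and spectral expansion λ(M). Then λ(M) ≤ (2ε)^{1/T(ε)}. -/
/-!
For `x ⊥ π`, reversibility makes `M` self-adjoint for `⟨·,·⟩_π`, so by Cauchy–Schwarz
`r t = ‖x M^t‖_π` satisfies `r (t+1)^2 ≤ r t * r (t+2)` and therefore `r t ≥ r 0 * (r 1 / r 0)^t`.
On the other hand a sum-zero vector is the difference of two nonnegative vectors of equal mass,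
each of which `M^T` brings within `2ε · mass` of `mass · π` in `ℓ¹`; so `M^T` contracts the
`ℓ¹` norm of sum-zero vectors by `2ε`, and `r (k T) ≤ C (2ε)^k`. Letting `k → ∞` gives
`(r 1 / r 0)^T ≤ 2ε`.
-/

open Finset Matrix

/-- Row-stochastic matrix. -/
def IsStochastic {n : ℕ} (M : Matrix (Fin n) (Fin n) ℝ) : Prop :=
  (∀ i j, 0 ≤ M i j) ∧ ∀ i, ∑ j, M i j = 1

/-- Probability distribution on `Fin n`. -/
def IsDist {n : ℕ} (x : Fin n → ℝ) : Prop :=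
  (∀ i, 0 ≤ x i) ∧ ∑ i, x i = 1

/-- Total variation distance. -/
noncomputable def tvDist {n : ℕ} (u w : Fin n → ℝ) : ℝ :=
  (1 / 2) * ∑ i, |u i - w i|

/-- Inner product under the π-kernel. -/
noncomputable def piInner {n : ℕ} (π u v : Fin n → ℝ) : ℝ :=
  ∑ i, u i * v i / π i

/-- π-norm. -/
noncomputable def piNorm {n : ℕ} (π u : Fin n → ℝ) : ℝ :=
  Real.sqrt (∑ i, (u i) ^ 2 / π i)

/-- Spectral expansion of a Markov chain with stationary distribution π. -/
noncomputable def specExp {n : ℕ} (π : Fin n → ℝ) (M : Matrix (Fin n) (Fin n) ℝ) : ℝ :=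
  sSup {r : ℝ | ∃ x : Fin n → ℝ, x ≠ 0 ∧ piInner π x π = 0 ∧
    r = piNorm π (x ᵥ* M) / piNorm π x}

lemma le_of_forall_pow_le_mul_pow {a b C : ℝ} (hb : 0 ≤ b) (h : ∀ k : ℕ, a ^ k ≤ C * b ^ k) :
    a ≤ b := by
  by_contra! hba
  have ha : 0 < a := hb.trans_lt hba
  have hlim : Filter.Tendsto (fun k : ℕ => C * (b / a) ^ k) Filter.atTop (nhds 0) := by
    simpa using (tendsto_pow_atTop_nhds_zero_of_lt_one (div_nonneg hb ha.le)
      ((div_lt_one ha).2 hba)).const_mul C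
  obtain ⟨k, hk⟩ := (hlim.eventually (gt_mem_nhds one_pos)).exists
  have : 1 ≤ C * (b / a) ^ k := by
    rw [div_pow, ← mul_div_assoc, le_div_iff₀ (pow_pos ha k), one_mul]
    exact h k
  linarith

lemma mul_div_pow_le_of_sq_le_mul {r : ℕ → ℝ} (hr : ∀ t, 0 ≤ r t) (hr0 : 0 < r 0)
    (hconv : ∀ t, r (t + 1) ^ 2 ≤ r t * r (t + 2)) (t : ℕ) :
    r 0 * (r 1 / r 0) ^ t ≤ r t := by
  rcases (hr 1).eq_or_lt with hr1 | hr1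
  · cases t with
    | zero => simp
    | succ t => simpa [← hr1] using hr (t + 1)
  have hpos : ∀ t, 0 < r t := by
    suffices ∀ t, 0 < r t ∧ 0 < r (t + 1) from fun t => (this t).1
    intro t
    induction t with
    | zero => exact ⟨hr0, hr1⟩
    | succ t ih =>
      refine ⟨ih.2, pos_of_mul_pos_right ?_ (hr t)⟩
      exact (pow_pos ih.2 2).trans_le (hconv t)
  have hratio : Monotone fun t => r (t + 1) / r t := by
    refine monotone_nat_of_le_succ fun t => ?_
    rw [div_le_div_iff₀ (hpos t) (hpos (t + 1))]
    nlinarith [hconv t]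
  induction t with
  | zero => simp
  | succ t ih =>
    calc r 0 * (r 1 / r 0) ^ (t + 1) = r 0 * (r 1 / r 0) ^ t * (r 1 / r 0) := by ring
      _ ≤ r t * (r (t + 1) / r t) :=
        mul_le_mul ih (hratio (Nat.zero_le t)) (div_nonneg (hr 1) hr0.le) (hr t)
      _ = r (t + 1) := mul_div_cancel₀ _ (hpos t).ne'

lemma sum_vecMul_of_mem_rowStochastic {ι : Type*} [Fintype ι] [DecidableEq ι]
    {N : Matrix ι ι ℝ} (hN : N ∈ rowStochastic ℝ ι) (y : ι → ℝ) :
    ∑ j, (y ᵥ* N) j = ∑ i, y i := by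
  rw [← dotProduct_one, ← dotProduct_one, ← dotProduct_mulVec, one_vecMul_of_mem_rowStochastic hN]

section Mixing

variable {n : ℕ} {N : Matrix (Fin n) (Fin n) ℝ} {π : Fin n → ℝ} {ε : ℝ}

lemma IsDist.vecMul {x : Fin n → ℝ} (hx : IsDist x) (hN : N ∈ rowStochastic ℝ (Fin n)) :
    IsDist (x ᵥ* N) :=
  ⟨nonneg_vecMul_of_mem_rowStochastic hN hx.1, (sum_vecMul_of_mem_rowStochastic hN x).trans hx.2⟩

lemma sum_abs_vecMul_sub_le_of_tvDist_le
    (hmix : ∀ x, IsDist x → tvDist (x ᵥ* N) π ≤ ε) {p : Fin n → ℝ} (hp : ∀ i, 0 ≤ p i) :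
    ∑ j, |(p ᵥ* N) j - (∑ i, p i) * π j| ≤ 2 * ε * ∑ i, p i := by
  rcases (sum_nonneg fun i _ => hp i : 0 ≤ ∑ i, p i).eq_or_lt with hs | hs
  · have hp0 : p = 0 := funext fun i => (sum_eq_zero_iff_of_nonneg fun i _ => hp i).1 hs.symm i
      (mem_univ i)
    simp [hp0]
  set s := ∑ i, p i
  have hdist : IsDist (s⁻¹ • p) :=
    ⟨fun i => mul_nonneg (inv_nonneg.2 hs.le) (hp i),
      by simp [← mul_sum, s, inv_mul_cancel₀ hs.ne']⟩
  have hp_eq : p = s • s⁻¹ • p := by rw [smul_smul, mul_inv_cancel₀ hs.ne', one_smul]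
  calc ∑ j, |(p ᵥ* N) j - s * π j| = s * ∑ j, |((s⁻¹ • p) ᵥ* N) j - π j| := by
        rw [mul_sum]
        refine sum_congr rfl fun j _ => ?_
        conv_lhs => rw [hp_eq, smul_vecMul, Pi.smul_apply, smul_eq_mul, ← mul_sub, abs_mul,
          abs_of_pos hs]
    _ ≤ s * (2 * ε) := by
        gcongr
        have := hmix _ hdist
        rw [tvDist] at this
        linarith
    _ = 2 * ε * s := mul_comm _ _

lemma sum_abs_vecMul_le_of_tvDist_le (hmix : ∀ x, IsDist x → tvDist (x ᵥ* N) π ≤ ε)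
    {y : Fin n → ℝ} (hy : ∑ i, y i = 0) :
    ∑ j, |(y ᵥ* N) j| ≤ 2 * ε * ∑ i, |y i| := by
  have hmass : ∑ i, y⁺ i = ∑ i, y⁻ i := by
    rw [← sub_eq_zero, ← sum_sub_distrib, ← hy]
    simp
  have habs : ∑ i, |y i| = ∑ i, y⁺ i + ∑ i, y⁻ i := by
    rw [← sum_add_distrib]
    simp [posPart_add_negPart]
  set s := ∑ i, y⁺ i
  calc ∑ j, |(y ᵥ* N) j|
      = ∑ j, |((y⁺ ᵥ* N) j - s * π j) - ((y⁻ ᵥ* N) j - s * π j)| := by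
        refine sum_congr rfl fun j _ => ?_
        rw [sub_sub_sub_cancel_right, ← Pi.sub_apply, ← sub_vecMul, posPart_sub_negPart]
    _ ≤ ∑ j, (|(y⁺ ᵥ* N) j - s * π j| + |(y⁻ ᵥ* N) j - s * π j|) :=
        sum_le_sum fun j _ => abs_sub _ _
    _ ≤ 2 * ε * s + 2 * ε * s := by
        rw [sum_add_distrib]
        gcongr
        · exact sum_abs_vecMul_sub_le_of_tvDist_le hmix fun i => posPart_nonneg _
        · rw [hmass]
          exact sum_abs_vecMul_sub_le_of_tvDist_le hmix fun i => negPart_nonneg _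
    _ = 2 * ε * ∑ i, |y i| := by
        rw [habs, ← hmass, mul_add]

lemma sum_abs_vecMul_pow_le_of_tvDist_le (hN : N ∈ rowStochastic ℝ (Fin n)) (hε : 0 ≤ ε)
    (hmix : ∀ x, IsDist x → tvDist (x ᵥ* N) π ≤ ε) {y : Fin n → ℝ} (hy : ∑ i, y i = 0)
    (k : ℕ) : ∑ j, |(y ᵥ* N ^ k) j| ≤ (2 * ε) ^ k * ∑ i, |y i| := by
  induction k with
  | zero => simp
  | succ k ih =>
    have hyk : ∑ i, (y ᵥ* N ^ k) i = 0 :=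
      (sum_vecMul_of_mem_rowStochastic (pow_mem hN k) y).trans hy
    calc ∑ j, |(y ᵥ* N ^ (k + 1)) j| = ∑ j, |((y ᵥ* N ^ k) ᵥ* N) j| := by
          rw [pow_succ, vecMul_vecMul]
      _ ≤ 2 * ε * ((2 * ε) ^ k * ∑ i, |y i|) := by
          grw [sum_abs_vecMul_le_of_tvDist_le hmix hyk, ih]
      _ = (2 * ε) ^ (k + 1) * ∑ i, |y i| := by ring

end Mixing

section PiNorm

variable {n : ℕ} {π : Fin n → ℝ}

lemma piNorm_pos (hπ : ∀ i, 0 < π i) {u : Fin n → ℝ} (hu : u ≠ 0) : 0 < piNorm π u := by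
  obtain ⟨i, hi⟩ := Function.ne_iff.1 hu
  refine Real.sqrt_pos.2 (sum_pos' (fun j _ => div_nonneg (sq_nonneg _) (hπ j).le)
    ⟨i, mem_univ i, div_pos ?_ (hπ i)⟩)
  exact pow_pos (abs_pos.2 hi) 2 |>.trans_eq (sq_abs _)

lemma piInner_self (hπ : ∀ i, 0 ≤ π i) (u : Fin n → ℝ) : piInner π u u = piNorm π u ^ 2 := by
  rw [piNorm, Real.sq_sqrt (sum_nonneg fun i _ => div_nonneg (sq_nonneg _) (hπ i)), piInner]
  simp only [sq]

lemma piInner_le_piNorm_mul_piNorm (hπ : ∀ i, 0 ≤ π i) (u v : Fin n → ℝ) :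
    piInner π u v ≤ piNorm π u * piNorm π v := by
  have h := Real.sum_mul_le_sqrt_mul_sqrt univ (fun i => u i / √(π i)) (fun i => v i / √(π i))
  simp only [div_pow, Real.sq_sqrt (hπ _), div_mul_div_comm, Real.mul_self_sqrt (hπ _)] at h
  exact h

lemma piInner_pi_eq_sum (hπ : ∀ i, 0 < π i) (u : Fin n → ℝ) : piInner π u π = ∑ i, u i :=
  sum_congr rfl fun i _ => mul_div_cancel_right₀ _ (hπ i).ne'

lemma piNorm_le_mul_sum_abs (hπ : ∀ i, 0 ≤ π i) (y : Fin n → ℝ) :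
    piNorm π y ≤ √(∑ i, (π i)⁻¹) * ∑ i, |y i| := by
  have hy : ∀ i, y i ^ 2 / π i ≤ (π i)⁻¹ * (∑ j, |y j|) ^ 2 := fun i => by
    rw [div_eq_inv_mul, ← sq_abs]
    gcongr
    · exact inv_nonneg.2 (hπ i)
    · exact single_le_sum (fun j _ => abs_nonneg (y j)) (mem_univ i)
  calc piNorm π y ≤ √((∑ i, (π i)⁻¹) * (∑ i, |y i|) ^ 2) := by
        rw [sum_mul]
        exact Real.sqrt_le_sqrt (sum_le_sum fun i _ => hy i)
    _ = √(∑ i, (π i)⁻¹) * ∑ i, |y i| := by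
        rw [Real.sqrt_mul (sum_nonneg fun i _ => inv_nonneg.2 (hπ i)),
          Real.sqrt_sq (sum_nonneg fun i _ => abs_nonneg _)]

variable {M : Matrix (Fin n) (Fin n) ℝ}

lemma piInner_vecMul_left (hπ : ∀ i, 0 < π i) (hrev : ∀ i j, π i * M i j = π j * M j i)
    (u v : Fin n → ℝ) : piInner π (u ᵥ* M) v = piInner π u (v ᵥ* M) := by
  have hsymm : ∀ i j, M i j / π j = M j i / π i := fun i j => by
    rw [div_eq_div_iff (hπ j).ne' (hπ i).ne']
    linear_combination hrev i j
  simp only [piInner, vecMul, dotProduct, sum_mul, sum_div, mul_sum]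
  rw [sum_comm]
  refine sum_congr rfl fun i _ => sum_congr rfl fun j _ => ?_
  calc u i * M i j * v j / π j = u i * v j * (M i j / π j) := by ring
    _ = u i * v j * (M j i / π i) := by rw [hsymm]
    _ = u i * (v j * M j i) / π i := by ring

lemma piNorm_vecMul_pow_sq_le (hπ : ∀ i, 0 < π i) (hrev : ∀ i j, π i * M i j = π j * M j i)
    (x : Fin n → ℝ) (t : ℕ) :
    piNorm π (x ᵥ* M ^ (t + 1)) ^ 2 ≤ piNorm π (x ᵥ* M ^ t) * piNorm π (x ᵥ* M ^ (t + 2)) := by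
  have hπ' : ∀ i, 0 ≤ π i := fun i => (hπ i).le
  rw [← piInner_self hπ']
  calc piInner π (x ᵥ* M ^ (t + 1)) (x ᵥ* M ^ (t + 1))
      = piInner π (x ᵥ* M ^ t) (x ᵥ* M ^ (t + 2)) := by
        rw [pow_succ, ← vecMul_vecMul, piInner_vecMul_left hπ hrev]
        simp only [vecMul_vecMul, pow_succ, mul_assoc]
    _ ≤ _ := piInner_le_piNorm_mul_piNorm hπ' _ _

end PiNorm

section SpectralBound

variable {n : ℕ} {M : Matrix (Fin n) (Fin n) ℝ} {π : Fin n → ℝ} {ε : ℝ} {t : ℕ}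

lemma piNorm_vecMul_div_le_of_tvDist_le (hM : M ∈ rowStochastic ℝ (Fin n))
    (hπ : ∀ i, 0 < π i) (hrev : ∀ i j, π i * M i j = π j * M j i) (hε : 0 ≤ ε) (ht : t ≠ 0)
    (hmix : ∀ x, IsDist x → tvDist (x ᵥ* M ^ t) π ≤ ε) {x : Fin n → ℝ} (hx0 : x ≠ 0)
    (hx : ∑ i, x i = 0) :
    piNorm π (x ᵥ* M) / piNorm π x ≤ (2 * ε) ^ ((1 : ℝ) / t) := by
  set r : ℕ → ℝ := fun s => piNorm π (x ᵥ* M ^ s)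
  have hr0 : r 0 = piNorm π x := by simp [r]
  have hr1 : r 1 = piNorm π (x ᵥ* M) := by simp [r]
  have hr0_pos : 0 < r 0 := hr0 ▸ piNorm_pos hπ hx0
  have hgeom := mul_div_pow_le_of_sq_le_mul (r := r) (fun s => Real.sqrt_nonneg _) hr0_pos
    (piNorm_vecMul_pow_sq_le hπ hrev x)
  rw [← hr0, ← hr1]
  set a := r 1 / r 0
  have ha : 0 ≤ a := div_nonneg (Real.sqrt_nonneg _) hr0_pos.le
  set C := √(∑ i, (π i)⁻¹) * ∑ i, |x i|
  have hpow : a ^ t ≤ 2 * ε := by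
    refine le_of_forall_pow_le_mul_pow (C := C / r 0) (by positivity) fun k => ?_
    have hdecay : r 0 * (a ^ t) ^ k ≤ C * (2 * ε) ^ k :=
      calc r 0 * (a ^ t) ^ k = r 0 * a ^ (t * k) := by rw [pow_mul]
        _ ≤ r (t * k) := hgeom _
        _ ≤ √(∑ i, (π i)⁻¹) * ∑ j, |(x ᵥ* M ^ (t * k)) j| :=
            piNorm_le_mul_sum_abs (fun i => (hπ i).le) _
        _ ≤ √(∑ i, (π i)⁻¹) * ((2 * ε) ^ k * ∑ i, |x i|) := by
            rw [pow_mul]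
            gcongr
            exact sum_abs_vecMul_pow_le_of_tvDist_le (pow_mem hM t) hε hmix hx k
        _ = C * (2 * ε) ^ k := by ring
    rw [div_mul_eq_mul_div, le_div_iff₀ hr0_pos]
    linarith
  calc a = (a ^ t) ^ ((t : ℝ)⁻¹) := (Real.pow_rpow_inv_natCast ha ht).symm
    _ ≤ (2 * ε) ^ ((t : ℝ)⁻¹) := Real.rpow_le_rpow (by positivity) hpow (by positivity)
    _ = (2 * ε) ^ ((1 : ℝ) / t) := by rw [one_div]

lemma specExp_le_of_tvDist_le (hM : M ∈ rowStochastic ℝ (Fin n)) (hπ : ∀ i, 0 < π i)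
    (hrev : ∀ i j, π i * M i j = π j * M j i) (hε : 0 ≤ ε) (ht : t ≠ 0)
    (hmix : ∀ x, IsDist x → tvDist (x ᵥ* M ^ t) π ≤ ε) :
    specExp π M ≤ (2 * ε) ^ ((1 : ℝ) / t) := by
  refine Real.sSup_le ?_ (by positivity)
  rintro _ ⟨x, hx0, hx, rfl⟩
  exact piNorm_vecMul_div_le_of_tvDist_le hM hπ hrev hε ht hmix hx0 (piInner_pi_eq_sum hπ x ▸ hx)

end SpectralBound

theorem stmt_2_general (n : ℕ) (M : Matrix (Fin n) (Fin n) ℝ) (π : Fin n → ℝ)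
    (hM : IsStochastic M) (hπpos : ∀ i, 0 < π i)
    (hrev : ∀ i j, π i * M i j = π j * M j i)
    (ε : ℝ) (hε0 : 0 < ε) (hε : ε ≤ 1 / 2)
    (T : ℕ)
    (hT : IsLeast {t : ℕ | ∀ x : Fin n → ℝ, IsDist x → tvDist (x ᵥ* (M ^ t)) π ≤ ε} T) :
    specExp π M ≤ (2 * ε) ^ ((1 : ℝ) / T) := by
  have hM' : M ∈ rowStochastic ℝ (Fin n) := mem_rowStochastic_iff_sum.2 hM
  rcases Nat.eq_zero_or_pos T with rfl | hT_pos
  · -- `1 / 0 = 0` makes the bound `1`; mixing at time `0` persists at time `1`, giving `λ ≤ 2ε`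
    have hmix : ∀ x, IsDist x → tvDist (x ᵥ* M ^ 1) π ≤ ε := fun x hx => by
      simpa using hT.1 (x ᵥ* M) (hx.vecMul hM')
    have hbound := specExp_le_of_tvDist_le hM' hπpos hrev hε0.le one_ne_zero hmix
    norm_num at hbound ⊢
    linarith
  · exact specExp_le_of_tvDist_le hM' hπpos hrev hε0.le hT_pos.ne' hT.1

theorem stmt_2 (n : ℕ) (M : Matrix (Fin n) (Fin n) ℝ) (π : Fin n → ℝ)
    (hM : IsStochastic M) (hπ : IsDist π) (hπpos : ∀ i, 0 < π i)
    (hstat : π ᵥ* M = π)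
    (hrev : ∀ i j, π i * M i j = π j * M j i)
    (ε : ℝ) (hε0 : 0 < ε) (hε : ε ≤ 1 / 2)
    (T : ℕ)
    (hT : IsLeast {t : ℕ | ∀ x : Fin n → ℝ, IsDist x → tvDist (x ᵥ* (M ^ t)) π ≤ ε} T) :
    specExp π M ≤ (2 * ε) ^ ((1 : ℝ) / T) :=
  stmt_2_general n M π hM hπpos hrev ε hε0 hε T hT
end

section
/- Let M be an ergodic (possibly irreversible) finite Markov chain with stationary distribution π and ε-mixing time T(ε) for 0 < ε ≤ 1/2. Then the spectral expansion of M^{T(ε)} satisfies λ(M^{T(ε)}) ≤ √(2ε). -/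
open Finset Matrix

/-- Component of `x` parallel to `π` (in the π-inner product). -/
noncomputable def parComp {n : ℕ} (π x : Fin n → ℝ) : Fin n → ℝ :=
  fun i => piInner π x π * π i

/-- Component of `x` perpendicular to `π` (in the π-inner product). -/
noncomputable def perpComp {n : ℕ} (π x : Fin n → ℝ) : Fin n → ℝ :=
  fun i => x i - parComp π x i

/-!
Write `N = M ^ T`. Testing the mixing bound on point masses gives `∑ k, |N i k - π k| ≤ 2ε` for
every row `i`. For `x ⊥ π`, i.e. `∑ i, x i = 0`, bilinearity gives
`‖x N‖²_π = ∑ i j, x i x j (⟨N i, N j⟩_π - 1)`, a quadratic form whose kernel is symmetric even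
though `N` need not be reversible (it is the Gram matrix of the rows of `N`). Since
`⟨N i, N j⟩_π - 1 = ⟨N i - π, N j⟩_π` and `π N = π`, its `π`-weighted absolute row sums are at most
`∑ k, |N i k - π k| ≤ 2ε`, and the Schur test bounds the form by `2ε ‖x‖²_π`.
-/

theorem mul_mul_le_add_sq_div_two_mul_abs (a b e : ℝ) : a * b * e ≤ (a ^ 2 + b ^ 2) / 2 * |e| := by
  rcases abs_cases e with ⟨he, -⟩ | ⟨he, -⟩ <;> rw [he] <;>
    nlinarith [sq_nonneg (a - b), sq_nonneg (a + b), abs_nonneg e]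

theorem sum_sum_mul_mul_le_of_sum_mul_abs_le {ι : Type*} [Fintype ι] {E : ι → ι → ℝ}
    (hE : ∀ i j, E i j = E j i) {w : ι → ℝ} (hw : ∀ i, 0 < w i) {c : ℝ}
    (hrow : ∀ i, ∑ j, w j * |E i j| ≤ c) (x : ι → ℝ) :
    ∑ i, ∑ j, x i * x j * E i j ≤ c * ∑ i, x i ^ 2 / w i := by
  set S : ι → ι → ℝ := fun i j => x i ^ 2 / w i * (w j * |E i j|)
  have hterm : ∀ i j, x i * x j * E i j ≤ (S i j + S j i) / 2 := by
    intro i j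
    have hi := (hw i).ne'
    have hj := (hw j).ne'
    have key := mul_mul_le_add_sq_div_two_mul_abs (x i / w i) (x j / w j) (w i * w j * E i j)
    rw [abs_mul, abs_mul, abs_of_pos (hw i), abs_of_pos (hw j)] at key
    simp only [S, hE j i]
    convert key using 1 <;> field_simp
  have hswap : ∑ i, ∑ j, S j i = ∑ i, ∑ j, S i j := Finset.sum_comm
  calc ∑ i, ∑ j, x i * x j * E i j
      ≤ ∑ i, ∑ j, (S i j + S j i) / 2 := by gcongr with i _ j _; exact hterm i j
    _ = ∑ i, x i ^ 2 / w i * ∑ j, w j * |E i j| := by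
        simp only [← Finset.sum_div, Finset.sum_add_distrib, hswap, Finset.mul_sum, S]
        ring
    _ ≤ ∑ i, x i ^ 2 / w i * c := by
        gcongr with i _
        · exact div_nonneg (sq_nonneg _) (hw i).le
        · exact hrow i
    _ = c * ∑ i, x i ^ 2 / w i := by rw [Finset.mul_sum]; simp only [mul_comm]

section PiInner

variable {n : ℕ} {π : Fin n → ℝ}

theorem piInner_comm (u v : Fin n → ℝ) : piInner π u v = piInner π v u := by
  simp only [piInner, mul_comm]

theorem piInner_self_right (hπ : ∀ i, π i ≠ 0) (u : Fin n → ℝ) : piInner π u π = ∑ i, u i := by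
  simp only [piInner, mul_div_assoc, div_self (hπ _), mul_one]

theorem piNorm_eq_sqrt_piInner (u : Fin n → ℝ) : piNorm π u = √(piInner π u u) := by
  simp only [piNorm, piInner, sq]

theorem piInner_vecMul_self (N : Matrix (Fin n) (Fin n) ℝ) (x : Fin n → ℝ) :
    piInner π (x ᵥ* N) (x ᵥ* N) = ∑ i, ∑ j, x i * x j * piInner π (N i) (N j) := by
  simp only [piInner, vecMul, dotProduct]
  simp_rw [Finset.sum_mul_sum, Finset.sum_div, Finset.mul_sum]
  rw [Finset.sum_comm]
  refine Finset.sum_congr rfl fun i _ => ?_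
  rw [Finset.sum_comm]
  refine Finset.sum_congr rfl fun j _ => Finset.sum_congr rfl fun k _ => ?_
  ring

theorem piInner_self_nonneg (hπ : ∀ i, 0 < π i) (u : Fin n → ℝ) : 0 ≤ piInner π u u :=
  Finset.sum_nonneg fun i _ => div_nonneg (mul_self_nonneg _) (hπ i).le

end PiInner

theorem isDist_single {n : ℕ} (i : Fin n) : IsDist (Pi.single i 1) :=
  ⟨fun j => by by_cases h : j = i <;> simp [h], by simp⟩

theorem vecMul_pow_eq_self {n : ℕ} {M : Matrix (Fin n) (Fin n) ℝ} {π : Fin n → ℝ}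
    (hπM : π ᵥ* M = π) (t : ℕ) : π ᵥ* M ^ t = π := by
  induction t with
  | zero => simp
  | succ t ih => rw [pow_succ, ← vecMul_vecMul, ih, hπM]

theorem sum_abs_row_sub_le_of_tvDist_le {n : ℕ} {N : Matrix (Fin n) (Fin n) ℝ} {π : Fin n → ℝ}
    {ε : ℝ} (hmix : ∀ x, IsDist x → tvDist (x ᵥ* N) π ≤ ε) (i : Fin n) :
    ∑ k, |N i k - π k| ≤ 2 * ε := by
  have h := hmix _ (isDist_single i)
  rw [single_one_vecMul, tvDist] at h
  simp only [row] at h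
  linarith

section Stochastic

variable {n : ℕ} {π : Fin n → ℝ} {N : Matrix (Fin n) (Fin n) ℝ}

theorem sum_mul_abs_piInner_row_sub_one_le (hπ : ∀ i, 0 < π i)
    (hN : N ∈ rowStochastic ℝ (Fin n)) (hπN : π ᵥ* N = π) (i : Fin n) :
    ∑ j, π j * |piInner π (N i) (N j) - 1| ≤ ∑ k, |N i k - π k| := by
  have hcol : ∀ k, ∑ j, π j * N j k = π k := fun k => congrFun hπN k
  have hdiff : ∀ j, piInner π (N i) (N j) - 1 = ∑ k, (N i k - π k) * (N j k / π k) := by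
    intro j
    rw [← sum_row_of_mem_rowStochastic hN j, ← piInner_self_right (fun k => (hπ k).ne'),
      piInner_comm (N j), piInner, piInner, ← Finset.sum_sub_distrib]
    exact Finset.sum_congr rfl fun k _ => by ring
  calc ∑ j, π j * |piInner π (N i) (N j) - 1|
      ≤ ∑ j, π j * ∑ k, |N i k - π k| * (N j k / π k) := by
        gcongr with j _
        · exact (hπ j).le
        rw [hdiff]
        refine (Finset.abs_sum_le_sum_abs _ _).trans_eq (Finset.sum_congr rfl fun k _ => ?_)
        rw [abs_mul, abs_of_nonneg (div_nonneg (nonneg_of_mem_rowStochastic hN) (hπ k).le)]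
    _ = ∑ k, |N i k - π k| * ((∑ j, π j * N j k) / π k) := by
        simp only [Finset.mul_sum, Finset.sum_div]
        rw [Finset.sum_comm]
        exact Finset.sum_congr rfl fun k _ => Finset.sum_congr rfl fun j _ => by ring
    _ = ∑ k, |N i k - π k| := by
        simp only [hcol, div_self (hπ _).ne', mul_one]

theorem piInner_vecMul_self_le (hπ : ∀ i, 0 < π i) (hN : N ∈ rowStochastic ℝ (Fin n))
    (hπN : π ᵥ* N = π) {c : ℝ} (hrow : ∀ i, ∑ k, |N i k - π k| ≤ c) {x : Fin n → ℝ}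
    (hx : piInner π x π = 0) :
    piInner π (x ᵥ* N) (x ᵥ* N) ≤ c * piInner π x x := by
  have hsum : ∑ i, x i = 0 := (piInner_self_right (fun i => (hπ i).ne') x).symm.trans hx
  calc piInner π (x ᵥ* N) (x ᵥ* N)
      = ∑ i, ∑ j, x i * x j * piInner π (N i) (N j) := piInner_vecMul_self N x
    _ = ∑ i, ∑ j, x i * x j * (piInner π (N i) (N j) - 1) := by
        simp only [mul_sub, mul_one, Finset.sum_sub_distrib, ← Finset.mul_sum, hsum, mul_zero,
          sub_zero]
    _ ≤ c * ∑ i, x i ^ 2 / π i :=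
        sum_sum_mul_mul_le_of_sum_mul_abs_le (E := fun i j => piInner π (N i) (N j) - 1)
          (fun i j => by rw [piInner_comm]) hπ
          (fun i => (sum_mul_abs_piInner_row_sub_one_le hπ hN hπN i).trans (hrow i)) x
    _ = c * piInner π x x := by simp only [piInner, sq]

theorem piNorm_vecMul_le (hπ : ∀ i, 0 < π i) (hN : N ∈ rowStochastic ℝ (Fin n))
    (hπN : π ᵥ* N = π) {c : ℝ} (hrow : ∀ i, ∑ k, |N i k - π k| ≤ c) {x : Fin n → ℝ}
    (hx : piInner π x π = 0) :
    piNorm π (x ᵥ* N) ≤ √c * piNorm π x := by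
  rw [piNorm_eq_sqrt_piInner, piNorm_eq_sqrt_piInner,
    ← Real.sqrt_mul' _ (piInner_self_nonneg hπ x)]
  exact Real.sqrt_le_sqrt (piInner_vecMul_self_le hπ hN hπN hrow hx)

theorem specExp_le_sqrt (hπ : ∀ i, 0 < π i) (hN : N ∈ rowStochastic ℝ (Fin n))
    (hπN : π ᵥ* N = π) {c : ℝ} (hrow : ∀ i, ∑ k, |N i k - π k| ≤ c) :
    specExp π N ≤ √c := by
  refine Real.sSup_le ?_ (Real.sqrt_nonneg c)
  rintro _ ⟨x, -, hx, rfl⟩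
  exact div_le_of_le_mul₀ (Real.sqrt_nonneg _) (Real.sqrt_nonneg c)
    (piNorm_vecMul_le hπ hN hπN hrow hx)

end Stochastic

theorem stmt_3_general (n : ℕ) (M : Matrix (Fin n) (Fin n) ℝ) (π : Fin n → ℝ)
    (hM : IsStochastic M) (hπpos : ∀ i, 0 < π i)
    (hstat : π ᵥ* M = π)
    (ε : ℝ)
    (T : ℕ)
    (hT : IsLeast {t : ℕ | ∀ x : Fin n → ℝ, IsDist x → tvDist (x ᵥ* (M ^ t)) π ≤ ε} T) :
    specExp π (M ^ T) ≤ Real.sqrt (2 * ε) :=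
  specExp_le_sqrt hπpos (pow_mem (mem_rowStochastic_iff_sum.2 hM) T)
    (vecMul_pow_eq_self hstat T) (sum_abs_row_sub_le_of_tvDist_le hT.1)

theorem stmt_3 (n : ℕ) (M : Matrix (Fin n) (Fin n) ℝ) (π : Fin n → ℝ)
    (hM : IsStochastic M) (hπ : IsDist π) (hπpos : ∀ i, 0 < π i)
    (hstat : π ᵥ* M = π)
    (ε : ℝ) (hε0 : 0 < ε) (hε : ε ≤ 1 / 2)
    (T : ℕ)
    (hT : IsLeast {t : ℕ | ∀ x : Fin n → ℝ, IsDist x → tvDist (x ᵥ* (M ^ t)) π ≤ ε} T) :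
    specExp π (M ^ T) ≤ Real.sqrt (2 * ε) :=
  stmt_3_general n M π hM hπpos hstat ε T hT
end

section
/- Let π be a probability distribution with π_i > 0, f:[n]→[0,1] with ∑_i f(i)π_i = μ, and P diagonal with P_{jj} = e^{r f(j)}, where 0 ≤ r ≤ 1/2. Then the perpendicular component of πP satisfies ‖(πP)^⊥‖_π ≤ 2r√μ. -/
/-! Since `P` is diagonal, `(πP)_i = π_i e^{r f(i)}`, so `‖(πP)^⊥‖_π²` is the π-variance of
`e^{r f}`. A variance is at most the second moment about `1`, and `e^x ≤ 1 + 2x` on `[0, 1/2]`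
gives `(e^{r f} - 1)² ≤ 4r² f² ≤ 4r² f`, whose π-mean is `4r²μ`. -/

open Finset Matrix

theorem Real.exp_le_one_add_two_mul {x : ℝ} (h0 : 0 ≤ x) (h1 : x ≤ 1 / 2) :
    Real.exp x ≤ 1 + 2 * x := by
  have hx1 : 0 < 1 - x := by linarith
  calc Real.exp x ≤ 1 / (1 - x) := Real.exp_bound_div_one_sub_of_interval h0 (by linarith)
    _ ≤ 1 + 2 * x := by
      rw [div_le_iff₀ hx1]
      nlinarith

theorem sq_exp_mul_sub_one_le {r t : ℝ} (hr0 : 0 ≤ r) (hr : r ≤ 1 / 2) (ht0 : 0 ≤ t)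
    (ht1 : t ≤ 1) : (Real.exp (r * t) - 1) ^ 2 ≤ 4 * r ^ 2 * t := by
  have hrt : 0 ≤ r * t := mul_nonneg hr0 ht0
  have hlower : 0 ≤ Real.exp (r * t) - 1 := sub_nonneg.2 (Real.one_le_exp hrt)
  have hupper : Real.exp (r * t) - 1 ≤ 2 * (r * t) := by
    linarith [Real.exp_le_one_add_two_mul hrt (by nlinarith)]
  calc (Real.exp (r * t) - 1) ^ 2 ≤ (2 * (r * t)) ^ 2 := pow_le_pow_left₀ hlower hupper 2
    _ = 4 * r ^ 2 * t ^ 2 := by ring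
    _ ≤ 4 * r ^ 2 * t := by gcongr; nlinarith

theorem Finset.sum_mul_sub_wmean_sq {ι : Type*} [Fintype ι] {w : ι → ℝ} (hw : ∑ i, w i = 1)
    (a : ι → ℝ) (c : ℝ) :
    ∑ i, w i * (a i - ∑ j, w j * a j) ^ 2
      = ∑ i, w i * (a i - c) ^ 2 - (∑ j, w j * a j - c) ^ 2 := by
  set m := ∑ j, w j * a j
  have hmc : ∑ i, w i * (a i - c) = m - c := by
    simp only [mul_sub, Finset.sum_sub_distrib, ← Finset.sum_mul, hw, one_mul, m]
  have hsplit : ∀ i, w i * (a i - m) ^ 2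
      = w i * (a i - c) ^ 2 - 2 * (m - c) * (w i * (a i - c)) + (m - c) ^ 2 * w i := by
    intro i; ring
  simp only [hsplit, Finset.sum_add_distrib, Finset.sum_sub_distrib, ← Finset.mul_sum, hmc, hw]
  ring

theorem Finset.sum_mul_sub_wmean_sq_le {ι : Type*} [Fintype ι] {w : ι → ℝ} (hw : ∑ i, w i = 1)
    (a : ι → ℝ) (c : ℝ) :
    ∑ i, w i * (a i - ∑ j, w j * a j) ^ 2 ≤ ∑ i, w i * (a i - c) ^ 2 := by
  rw [Finset.sum_mul_sub_wmean_sq hw a c]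
  exact sub_le_self _ (sq_nonneg _)

section WeightedByPi

variable {n : ℕ} {π : Fin n → ℝ}

theorem piInner_mul_left_self (hπ : ∀ i, π i ≠ 0) (g : Fin n → ℝ) :
    piInner π (fun i => π i * g i) π = ∑ i, π i * g i := by
  refine Finset.sum_congr rfl fun i _ => ?_
  field_simp [hπ i]

theorem perpComp_mul_left (hπ : ∀ i, π i ≠ 0) (g : Fin n → ℝ) :
    perpComp π (fun i => π i * g i) = fun i => π i * (g i - ∑ j, π j * g j) := by
  ext i
  simp only [perpComp, parComp, piInner_mul_left_self hπ]
  ring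

theorem piNorm_mul_left (hπ : ∀ i, π i ≠ 0) (g : Fin n → ℝ) :
    piNorm π (fun i => π i * g i) = Real.sqrt (∑ i, π i * g i ^ 2) := by
  refine congrArg Real.sqrt (Finset.sum_congr rfl fun i _ => ?_)
  field_simp [hπ i]

end WeightedByPi

theorem stmt_8 (n : ℕ) (π : Fin n → ℝ) (hπ : IsDist π) (hπpos : ∀ i, 0 < π i)
    (f : Fin n → ℝ) (hf : ∀ i, 0 ≤ f i ∧ f i ≤ 1)
    (μ : ℝ) (hμ : ∑ i, f i * π i = μ)
    (r : ℝ) (hr0 : 0 ≤ r) (hr : r ≤ 1 / 2)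
    (P : Matrix (Fin n) (Fin n) ℝ)
    (hP : P = Matrix.diagonal fun j => Real.exp (r * f j)) :
    piNorm π (perpComp π (π ᵥ* P)) ≤ 2 * r * Real.sqrt μ := by
  have hπne : ∀ i, π i ≠ 0 := fun i => (hπpos i).ne'
  set e : Fin n → ℝ := fun j => Real.exp (r * f j)
  have hπP : π ᵥ* P = fun i => π i * e i := by
    ext i; rw [hP, Matrix.vecMul_diagonal]
  rw [hπP, perpComp_mul_left hπne, piNorm_mul_left hπne]
  calc Real.sqrt (∑ i, π i * (e i - ∑ j, π j * e j) ^ 2)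
      ≤ Real.sqrt (∑ i, π i * (e i - 1) ^ 2) :=
        Real.sqrt_le_sqrt (Finset.sum_mul_sub_wmean_sq_le hπ.2 e 1)
    _ ≤ Real.sqrt (∑ i, π i * (4 * r ^ 2 * f i)) :=
        Real.sqrt_le_sqrt <| Finset.sum_le_sum fun i _ => mul_le_mul_of_nonneg_left
          (sq_exp_mul_sub_one_le hr0 hr (hf i).1 (hf i).2) (hπpos i).le
    _ = 2 * r * Real.sqrt μ := by
      simp only [mul_left_comm (π _), ← Finset.mul_sum, mul_comm (π _), hμ]
      rw [show 4 * r ^ 2 = (2 * r) ^ 2 by ring, Real.sqrt_mul (sq_nonneg _),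
        Real.sqrt_sq (by linarith)]
end
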